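/- In the monoid presented by ⟨a, b ∣ (ab)^n·a = b^p⟩ (for fixed n ≥ 1 and p ≥ 1), the words b^(p+1)·a and a·b^(p+1) represent the same element. -/
import Mathlib


namespace Stmt4
def a : FreeMonoid (Fin 2) := FreeMonoid.of 0
def b : FreeMonoid (Fin 2) := FreeMonoid.of 1

theorem stmt4 (n p : ℕ) (hn : 1 ≤ n) (hp : 1 ≤ p) :
    conGen (fun x y => x = (a * b) ^ n * a ∧ y = b ^ p)
      (b ^ (p + 1) * a) (a * b ^ (p + 1)) := by
  set r : FreeMonoid (Fin 2) → FreeMonoid (Fin 2) → Prop :=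
    fun x y => x = (a * b) ^ n * a ∧ y = b ^ p with hr
  have h : conGen r ((a * b) ^ n * a) (b ^ p) := ConGen.Rel.of _ _ ⟨rfl, rfl⟩
  have e1 : b ^ (p + 1) * a = b ^ p * (b * a) := by
    rw [pow_succ]; rw [mul_assoc]
  have e2 : (a * b) ^ n * a * (b * a) = (a * b) * ((a * b) ^ n * a) := by
    rw [← mul_assoc, mul_assoc ((a*b)^n) a b, ← pow_succ, pow_succ', mul_assoc]
  have e3 : (a * b) * (b ^ p) = a * b ^ (p + 1) := by
    rw [pow_succ']; rw [mul_assoc]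
  have s1 : conGen r (b ^ (p + 1) * a) ((a * b) ^ n * a * (b * a)) := by
    rw [e1]; exact (conGen r).mul h.symm ((conGen r).refl _)
  have s2 : conGen r ((a * b) ^ n * a * (b * a)) (a * b ^ (p + 1)) := by
    rw [e2, ← e3]
    exact (conGen r).mul ((conGen r).refl _) h
  exact (conGen r).trans s1 s2
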